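/- arXiv:2502.15842 — 2 statements merged into one kernel-verified Lean document; each statement's English description precedes it below -/
import Mathlib

section
/- Let f, g, h be trajectories such that every pair among them overlaps and such that a_h ≤ a_g ≤ a_f and b_f ≤ b_h ≤ b_g. Then d_c(f,g) ≤ d_c(f,h) + d_c(h,g). -/
open MeasureTheory Set

/-- The ℓ_p norm on ℝ^r. -/
noncomputable def lpNorm (r : ℕ) (p : ℝ) (x : Fin r → ℝ) : ℝ :=
  (∑ i, |x i| ^ p) ^ (1 / p)

/-- The ℓ_p distance between two trajectory segments aligned on [t₁, t₂]. -/
noncomputable def segDist (r : ℕ) (p : ℝ) (t₁ t₂ : ℝ) (f g : ℝ → Fin r → ℝ) : ℝ :=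
  ∫ t in t₁..t₂, lpNorm r p (fun i => f t i - g t i)

/-- A trajectory: a function ℝ → ℝ^r together with an interval [a, b] (a ≤ b)
on which it is continuous. -/
structure Traj (r : ℕ) where
  f : ℝ → Fin r → ℝ
  a : ℝ
  b : ℝ
  hab : a ≤ b
  cont : ContinuousOn f (Set.Icc a b)

/-- Two trajectories overlap if their time domains intersect. -/
def Overlap {r : ℕ} (F G : Traj r) : Prop := max F.a G.a ≤ min F.b G.b

/-- The pairwise spatio-temporal trajectory distance with segment cutoff
coefficient cS (equal FA and MD cutoffs). -/
noncomputable def dC (r : ℕ) (p cS : ℝ) (F G : Traj r) : ℝ :=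
  ((r : ℝ) * (cS * (|F.a - G.a| + |F.b - G.b|)) ^ p +
    min ((segDist r p (max F.a G.a) (min F.b G.b) F.f G.f) ^ p)
        ((r : ℝ) * (2 * cS * (min F.b G.b - max F.a G.a)) ^ p)) ^ (1 / p)

lemma lpNorm_nonneg (r : ℕ) (p : ℝ) (x : Fin r → ℝ) : 0 ≤ lpNorm r p x :=
  Real.rpow_nonneg (Finset.sum_nonneg fun i _ => Real.rpow_nonneg (abs_nonneg _) _) _

lemma lpNorm_continuous (r : ℕ) {p : ℝ} (hp : 1 ≤ p) : Continuous (lpNorm r p) := by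
  have h0 : (0:ℝ) < p := lt_of_lt_of_le one_pos hp
  apply Continuous.rpow_const
  · exact continuous_finset_sum _ fun i _ =>
      ((continuous_abs.comp (continuous_apply i)).rpow_const fun x => Or.inr h0.le)
  · exact fun x => Or.inr (by positivity)

lemma lpNorm_tri (r : ℕ) {p : ℝ} (hp : 1 ≤ p) (x y z : Fin r → ℝ) :
    lpNorm r p (fun i => x i - z i) ≤
      lpNorm r p (fun i => x i - y i) + lpNorm r p (fun i => y i - z i) := by
  have h := Real.Lp_add_le (Finset.univ : Finset (Fin r))
      (fun i => x i - y i) (fun i => y i - z i) hp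
  simpa [_root_.lpNorm, sub_add_sub_cancel] using h

lemma min_rpow_eq {x y p : ℝ} (hx : 0 ≤ x) (hy : 0 ≤ y) (hp : 0 ≤ p) :
    min (x ^ p) (y ^ p) = (min x y) ^ p := by
  rcases le_total x y with h | h
  · rw [min_eq_left (Real.rpow_le_rpow hx h hp), min_eq_left h]
  · rw [min_eq_right (Real.rpow_le_rpow hy h hp), min_eq_right h]

lemma two_minkowski {p : ℝ} (hp : 1 ≤ p) {A1 A2 B1 B2 C1 C2 : ℝ}
    (hA1 : 0 ≤ A1) (hA2 : 0 ≤ A2) (hB1 : 0 ≤ B1) (hB2 : 0 ≤ B2)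
    (hC1 : 0 ≤ C1) (hC2 : 0 ≤ C2) (h1 : A1 ≤ B1 + C1) (h2 : A2 ≤ B2 + C2) :
    (A1 ^ p + A2 ^ p) ^ (1/p) ≤ (B1 ^ p + B2 ^ p) ^ (1/p) + (C1 ^ p + C2 ^ p) ^ (1/p) := by
  have h0 : (0:ℝ) < p := lt_of_lt_of_le one_pos hp
  have key := Real.Lp_add_le (Finset.univ : Finset (Fin 2)) ![B1, B2] ![C1, C2] hp
  simp only [Fin.sum_univ_two, Matrix.cons_val_zero, Matrix.cons_val_one, Matrix.head_cons] at key
  rw [abs_of_nonneg (add_nonneg hB1 hC1), abs_of_nonneg (add_nonneg hB2 hC2),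
    abs_of_nonneg hB1, abs_of_nonneg hB2, abs_of_nonneg hC1, abs_of_nonneg hC2] at key
  refine le_trans ?_ key
  refine Real.rpow_le_rpow (by positivity) ?_ (by positivity)
  exact add_le_add (Real.rpow_le_rpow hA1 h1 h0.le) (Real.rpow_le_rpow hA2 h2 h0.le)

lemma seg_integrable {r : ℕ} {p : ℝ} (hp : 1 ≤ p) {f g : ℝ → Fin r → ℝ} {a b : ℝ}
    (hab : a ≤ b) (hf : ContinuousOn f (Icc a b)) (hg : ContinuousOn g (Icc a b)) :
    IntervalIntegrable (fun t => lpNorm r p (fun i => f t i - g t i)) volume a b := by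
  apply ContinuousOn.intervalIntegrable
  rw [uIcc_of_le hab]
  exact (lpNorm_continuous r hp).comp_continuousOn (hf.sub hg)

/-- Triangle-type inequality for the pairwise trajectory distance under the
endpoint ordering of this case. -/
theorem dC_tri_case4 (r : ℕ) (hr : 1 ≤ r) (p : ℝ) (hp : 1 ≤ p)
    (cS : ℝ) (hcS : 0 < cS)
    (F G H : Traj r) (hFG : Overlap F G) (hFH : Overlap F H) (hHG : Overlap H G)
    (ha1 : H.a ≤ G.a) (ha2 : G.a ≤ F.a) (hb1 : F.b ≤ H.b) (hb2 : H.b ≤ G.b) :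
    dC r p cS F G ≤ dC r p cS F H + dC r p cS H G := by
  have h0 : (0:ℝ) < p := lt_of_lt_of_le one_pos hp
  have hpne : p ≠ 0 := ne_of_gt h0
  -- endpoint simplifications
  have hFab : F.a ≤ F.b := by
    have := hFG; rw [Overlap, max_eq_left ha2, min_eq_left (hb1.trans hb2)] at this; exact this
  have hGH : G.a ≤ H.b := by
    have := hHG; rw [Overlap, max_eq_right ha1, min_eq_left hb2] at this; exact this
  set rq : ℝ := (r:ℝ) ^ (1/p) with hrqdef
  have hrq0 : 0 ≤ rq := Real.rpow_nonneg (Nat.cast_nonneg r) _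
  have hrqp : ∀ X : ℝ, 0 ≤ X → (r:ℝ) * X ^ p = (rq * X) ^ p := by
    intro X hX
    rw [Real.mul_rpow hrq0 hX, hrqdef, ← Real.rpow_mul (Nat.cast_nonneg r),
      one_div_mul_cancel hpne, Real.rpow_one]
  -- segment distances
  set S1 := segDist r p F.a F.b F.f G.f with hS1def
  set S2 := segDist r p F.a F.b F.f H.f with hS2def
  set S3 := segDist r p G.a H.b H.f G.f with hS3def
  -- continuity on relevant intervals
  have hFc1 : ContinuousOn F.f (Icc F.a F.b) := F.cont
  have hGc1 : ContinuousOn G.f (Icc F.a F.b) :=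
    G.cont.mono (Icc_subset_Icc ha2 (hb1.trans hb2))
  have hHc1 : ContinuousOn H.f (Icc F.a F.b) :=
    H.cont.mono (Icc_subset_Icc (ha1.trans ha2) hb1)
  have hHc2 : ContinuousOn H.f (Icc G.a H.b) := H.cont.mono (Icc_subset_Icc ha1 le_rfl)
  have hGc2 : ContinuousOn G.f (Icc G.a H.b) := G.cont.mono (Icc_subset_Icc le_rfl hb2)
  have intFG := seg_integrable hp hFab hFc1 hGc1
  have intFH := seg_integrable hp hFab hFc1 hHc1
  have intHG' := seg_integrable hp hFab hHc1 hGc1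
  have intHG := seg_integrable hp hGH hHc2 hGc2
  -- nonnegativity of segment distances
  have hS1n : 0 ≤ S1 := intervalIntegral.integral_nonneg hFab (fun t _ => lpNorm_nonneg _ _ _)
  have hS2n : 0 ≤ S2 := intervalIntegral.integral_nonneg hFab (fun t _ => lpNorm_nonneg _ _ _)
  have hS3n : 0 ≤ S3 := intervalIntegral.integral_nonneg hGH (fun t _ => lpNorm_nonneg _ _ _)
  -- triangle inequality for segments
  have hStri : S1 ≤ S2 + S3 := by
    have step1 : S1 ≤ S2 + segDist r p F.a F.b H.f G.f := by
      have hmono := intervalIntegral.integral_mono_on hFab intFG (intFH.add intHG')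
        (fun t _ => lpNorm_tri r hp (F.f t) (H.f t) (G.f t))
      rw [intervalIntegral.integral_add intFH intHG'] at hmono
      exact hmono
    have step2 : segDist r p F.a F.b H.f G.f ≤ S3 :=
      intervalIntegral.integral_mono_interval ha2 hFab hb1
        (Filter.Eventually.of_forall (fun t => lpNorm_nonneg _ _ _)) intHG
    linarith
  -- cutoffs
  set cutF : ℝ := rq * (2 * cS * (F.b - F.a)) with hcutFdef
  set cutG : ℝ := rq * (2 * cS * (H.b - G.a)) with hcutGdef
  have hcutF0 : 0 ≤ cutF :=
    mul_nonneg hrq0 (mul_nonneg (by linarith) (by linarith))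
  have hcutG0 : 0 ≤ cutG :=
    mul_nonneg hrq0 (mul_nonneg (by linarith) (by linarith))
  have hcutle : cutF ≤ cutG := by
    apply mul_le_mul_of_nonneg_left _ hrq0
    apply mul_le_mul_of_nonneg_left (by linarith) (by linarith)
  -- rewrite the three dC values
  have eFG : dC r p cS F G =
      ((rq * (cS * ((F.a - G.a) + (G.b - F.b)))) ^ p + (min S1 cutF) ^ p) ^ (1/p) := by
    rw [dC, max_eq_left ha2, min_eq_left (hb1.trans hb2),
      abs_of_nonneg (by linarith : (0:ℝ) ≤ F.a - G.a),
      abs_sub_comm F.b G.b, abs_of_nonneg (by linarith : (0:ℝ) ≤ G.b - F.b),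
      hrqp _ (mul_nonneg hcS.le (by linarith)), hrqp _ (mul_nonneg (by linarith) (by linarith)), ← hS1def,
      min_rpow_eq hS1n hcutF0 h0.le]
  have eFH : dC r p cS F H =
      ((rq * (cS * ((F.a - H.a) + (H.b - F.b)))) ^ p + (min S2 cutF) ^ p) ^ (1/p) := by
    rw [dC, max_eq_left (ha1.trans ha2), min_eq_left hb1,
      abs_of_nonneg (by linarith : (0:ℝ) ≤ F.a - H.a),
      abs_sub_comm F.b H.b, abs_of_nonneg (by linarith : (0:ℝ) ≤ H.b - F.b),
      hrqp _ (mul_nonneg hcS.le (by linarith)), hrqp _ (mul_nonneg (by linarith) (by linarith)), ← hS2def,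
      min_rpow_eq hS2n hcutF0 h0.le]
  have eHG : dC r p cS H G =
      ((rq * (cS * ((G.a - H.a) + (G.b - H.b)))) ^ p + (min S3 cutG) ^ p) ^ (1/p) := by
    rw [dC, max_eq_right ha1, min_eq_left hb2,
      abs_sub_comm H.a G.a, abs_of_nonneg (by linarith : (0:ℝ) ≤ G.a - H.a),
      abs_sub_comm H.b G.b, abs_of_nonneg (by linarith : (0:ℝ) ≤ G.b - H.b),
      hrqp _ (mul_nonneg hcS.le (by linarith)), hrqp _ (mul_nonneg (by linarith) (by linarith)), ← hS3def,
      min_rpow_eq hS3n hcutG0 h0.le]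
  rw [eFG, eFH, eHG]
  apply two_minkowski hp
  · exact mul_nonneg hrq0 (mul_nonneg hcS.le (by linarith))
  · exact le_min hS1n hcutF0
  · exact mul_nonneg hrq0 (mul_nonneg hcS.le (by linarith))
  · exact le_min hS2n hcutF0
  · exact mul_nonneg hrq0 (mul_nonneg hcS.le (by linarith))
  · exact le_min hS3n hcutG0
  · -- temporal components
    have hx : (F.a - G.a) + (G.b - F.b) ≤
        ((F.a - H.a) + (H.b - F.b)) + ((G.a - H.a) + (G.b - H.b)) := by linarith
    calc rq * (cS * ((F.a - G.a) + (G.b - F.b)))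
        = (rq * cS) * ((F.a - G.a) + (G.b - F.b)) := by ring
      _ ≤ (rq * cS) * (((F.a - H.a) + (H.b - F.b)) + ((G.a - H.a) + (G.b - H.b))) :=
          mul_le_mul_of_nonneg_left hx (mul_nonneg hrq0 hcS.le)
      _ = _ := by ring
  · -- segment components
    have hB2n : 0 ≤ min S2 cutF := le_min hS2n hcutF0
    have hC2n : 0 ≤ min S3 cutG := le_min hS3n hcutG0
    rcases le_or_gt cutF S2 with h | h
    · have hB2 : min S2 cutF = cutF := min_eq_right h
      have : min S1 cutF ≤ cutF := min_le_right _ _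
      linarith
    · rcases le_or_gt cutG S3 with h' | h'
      · have hC2 : min S3 cutG = cutG := min_eq_right h'
        have : min S1 cutF ≤ cutF := min_le_right _ _
        linarith
      · rw [min_eq_left h.le, min_eq_left h'.le]
        have : min S1 cutF ≤ S1 := min_le_left _ _
        linarith
end

section
/- Let F = (f_1,…,f_m) and G = (g_1,…,g_n) be tuples of trajectories such that every pair of trajectories taken from F ∪ G overlaps and such that every trajectory has a nondegenerate domain (a < b). Then d_c(F,G) = 0 if and only if m = n and there exists a bijection σ of {1,…,n} such that for every j: a_{f_j} = a_{g_{σ(j)}}, b_{f_j} = b_{g_{σ(j)}}, and f_j(t) = g_{σ(j)}(t) for every t ∈ [a_{f_j}, b_{f_j}]. -/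
open MeasureTheory Set

/-- Duration of a trajectory. -/
noncomputable def Traj.T {r : ℕ} (F : Traj r) : ℝ := F.b - F.a

/-- The pairwise trajectory distance truncated by the trajectory cutoff
coefficient cT (equal FA and MD cutoffs). -/
noncomputable def dCheck (r : ℕ) (p cS cT : ℝ) (F G : Traj r) : ℝ :=
  min (dC r p cS F G)
    (((r : ℝ) * (cT * F.T) ^ p + (r : ℝ) * (cT * G.T) ^ p) ^ (1 / p))

/-- An assignment: a set of index pairs in which every left index and every
right index appears at most once. -/
def IsAssignment {m n : ℕ} (θ : Finset (Fin m × Fin n)) : Prop :=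
  ∀ q ∈ θ, ∀ q' ∈ θ, (q.1 = q'.1 ∨ q.2 = q'.2) → q = q'

open scoped Classical in
/-- The p-th power cost of a given assignment: truncated pairwise distances
for matched pairs plus trajectory FA/MD penalties for unmatched indices. -/
noncomputable def starCost (r : ℕ) {m n : ℕ} (p cS cT : ℝ)
    (F : Fin m → Traj r) (G : Fin n → Traj r) (θ : Finset (Fin m × Fin n)) : ℝ :=
  ∑ q ∈ θ, dCheck r p cS cT (F q.1) (G q.2) ^ p
    + ∑ j ∈ Finset.univ.filter (fun j : Fin m => ∀ q ∈ θ, q.1 ≠ j),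
        (r : ℝ) * (cT * (F j).T) ^ p
    + ∑ i ∈ Finset.univ.filter (fun i : Fin n => ∀ q ∈ θ, q.2 ≠ i),
        (r : ℝ) * (cT * (G i).T) ^ p

/-- The Star-ID distance between two tuples of trajectories: the minimum, over
all assignments, of the p-th root of the assignment cost. -/
noncomputable def starID (r : ℕ) {m n : ℕ} (p cS cT : ℝ)
    (F : Fin m → Traj r) (G : Fin n → Traj r) : ℝ :=
  sInf ((fun θ => starCost r p cS cT F G θ ^ (1 / p)) '' {θ | IsAssignment θ})

section StarIDProofs


lemma lpNorm_zero {r : ℕ} {p : ℝ} (hp : 0 < p) : lpNorm r p 0 = 0 := by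
  unfold _root_.lpNorm
  simp [Real.zero_rpow hp.ne', Real.zero_rpow (by positivity : p⁻¹ ≠ 0)]

lemma lpNorm_eq_zero {r : ℕ} {p : ℝ} (hp : 0 < p) {x : Fin r → ℝ}
    (h : lpNorm r p x = 0) : x = 0 := by
  unfold _root_.lpNorm at h
  have hs : (∑ i, |x i| ^ p) = 0 := by
    have hnn : 0 ≤ ∑ i, |x i| ^ p := by positivity
    rcases (Real.rpow_eq_zero hnn (by positivity : (1:ℝ)/p ≠ 0)).mp h with h'
    exact h'
  funext i
  have := (Finset.sum_eq_zero_iff_of_nonneg (fun i _ => by positivity)).mp hs i (Finset.mem_univ i)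
  have : |x i| = 0 := by
    have := (Real.rpow_eq_zero (abs_nonneg _) hp.ne').mp this
    exact this
  simpa using this

lemma lpNorm_continuousOn {r : ℕ} {p : ℝ} (hp : 0 < p) {f g : ℝ → Fin r → ℝ} {s : Set ℝ}
    (hf : ContinuousOn f s) (hg : ContinuousOn g s) :
    ContinuousOn (fun t => lpNorm r p (fun i => f t i - g t i)) s := by
  unfold _root_.lpNorm
  apply ContinuousOn.rpow_const
  · apply continuousOn_finset_sum
    intro i _
    apply ContinuousOn.rpow_const
    · exact (((continuous_apply i).comp_continuousOn hf).sub ((continuous_apply i).comp_continuousOn hg)).abs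
    · intro x _; right; exact hp.le
  · intro x _; right; positivity

lemma eq_zero_of_integral_eq_zero {φ : ℝ → ℝ} {a b : ℝ} (hab : a < b)
    (hc : ContinuousOn φ (Icc a b)) (hnn : ∀ t ∈ Icc a b, 0 ≤ φ t)
    (hint : (∫ t in a..b, φ t) = 0) : ∀ t ∈ Icc a b, φ t = 0 := by
  by_contra h
  push_neg at h
  obtain ⟨t₀, ht₀, hφ⟩ := h
  have hpos : 0 < φ t₀ := lt_of_le_of_ne (hnn t₀ ht₀) (Ne.symm hφ)
  have hcw := hc t₀ ht₀
  rw [Metric.continuousWithinAt_iff] at hcw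
  obtain ⟨δ, hδ, hball⟩ := hcw (φ t₀ / 2) (by linarith)
  set u := max a (t₀ - δ/2) with hu
  set v := min b (t₀ + δ/2) with hv
  have huv : u < v := by
    rcases ht₀ with ⟨h1, h2⟩
    apply max_lt <;> [apply lt_min; apply lt_min] <;> linarith
  have hsub : Icc u v ⊆ Icc a b := by
    apply Icc_subset_Icc (le_max_left _ _) (min_le_left _ _)
  have hlow : ∀ t ∈ Icc u v, φ t₀ / 2 ≤ φ t := by
    intro t ht
    have htab : t ∈ Icc a b := hsub ht
    have hd : dist t t₀ < δ := by
      rw [Real.dist_eq, abs_lt]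
      rcases ht with ⟨h1, h2⟩
      rcases ht₀ with ⟨h3, h4⟩
      constructor
      · have := le_trans (le_max_right a (t₀ - δ/2)) h1; linarith
      · have := le_trans h2 (min_le_right b (t₀ + δ/2)); linarith
    have := hball htab hd
    rw [Real.dist_eq, abs_lt] at this
    linarith [this.1]
  have hIab : IntervalIntegrable φ volume a b :=
    (hc.mono (by rw [uIcc_of_le hab.le])).intervalIntegrable
  have hIuv : IntervalIntegrable φ volume u v :=
    ((hc.mono hsub).mono (by rw [uIcc_of_le huv.le])).intervalIntegrable
  have hIau : IntervalIntegrable φ volume a u :=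
    hIab.mono_set (by
      rw [uIcc_of_le (le_max_left a _ : a ≤ u), uIcc_of_le hab.le]
      exact Icc_subset_Icc le_rfl (hsub ⟨le_rfl, huv.le⟩).2)
  have hIvb : IntervalIntegrable φ volume v b :=
    hIab.mono_set (by
      rw [uIcc_of_le (min_le_left b _ : v ≤ b), uIcc_of_le hab.le]
      exact Icc_subset_Icc (hsub ⟨huv.le, le_rfl⟩).1 le_rfl)
  have hau : a ≤ u := le_max_left _ _
  have hvb : v ≤ b := min_le_left _ _
  have h1 : (0:ℝ) ≤ ∫ t in a..u, φ t :=
    intervalIntegral.integral_nonneg hau (fun t ht => hnn t ⟨ht.1, le_trans ht.2 (le_trans huv.le hvb)⟩)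
  have h3 : (0:ℝ) ≤ ∫ t in v..b, φ t :=
    intervalIntegral.integral_nonneg hvb (fun t ht => hnn t ⟨le_trans (le_trans hau huv.le) ht.1, ht.2⟩)
  have h2 : φ t₀ / 2 * (v - u) ≤ ∫ t in u..v, φ t := by
    have := intervalIntegral.integral_mono_on huv.le
      (intervalIntegrable_const (c := φ t₀ / 2)) hIuv hlow
    rw [intervalIntegral.integral_const] at this
    rw [smul_eq_mul] at this
    linarith
  have hsplit : (∫ t in a..b, φ t) = (∫ t in a..u, φ t) + (∫ t in u..v, φ t) + (∫ t in v..b, φ t) := by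
    rw [intervalIntegral.integral_add_adjacent_intervals hIau hIuv,
      intervalIntegral.integral_add_adjacent_intervals (hIau.trans hIuv) hIvb]
  nlinarith [hpos, huv]


lemma segDist_nonneg {r : ℕ} {p t₁ t₂ : ℝ} (h : t₁ ≤ t₂) (f g : ℝ → Fin r → ℝ) :
    0 ≤ segDist r p t₁ t₂ f g :=
  intervalIntegral.integral_nonneg h (fun t _ => lpNorm_nonneg _ _ _)

lemma dC_nonneg {r : ℕ} {p cS : ℝ} (hcS : 0 ≤ cS) {F G : Traj r} (hov : Overlap F G) :
    0 ≤ dC r p cS F G := by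
  unfold dC
  apply Real.rpow_nonneg
  have h1 : (0:ℝ) ≤ (r : ℝ) * (cS * (|F.a - G.a| + |F.b - G.b|)) ^ p :=
    mul_nonneg (Nat.cast_nonneg r) (Real.rpow_nonneg (by positivity) _)
  have h2 : (0:ℝ) ≤ (segDist r p (max F.a G.a) (min F.b G.b) F.f G.f) ^ p :=
    Real.rpow_nonneg (segDist_nonneg hov _ _) _
  have h3 : (0:ℝ) ≤ (r : ℝ) * (2 * cS * (min F.b G.b - max F.a G.a)) ^ p :=
    mul_nonneg (Nat.cast_nonneg r) (Real.rpow_nonneg (mul_nonneg (by linarith) (by have h' : max F.a G.a ≤ min F.b G.b := hov; linarith)) _)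
  have := le_min h2 h3
  linarith

lemma dCheck_nonneg {r : ℕ} {p cS cT : ℝ} (hcS : 0 ≤ cS) (hcT : 0 ≤ cT) {F G : Traj r}
    (hov : Overlap F G) : 0 ≤ dCheck r p cS cT F G := by
  unfold dCheck
  refine le_min (dC_nonneg hcS hov) (Real.rpow_nonneg ?_ _)
  have h1 : (0:ℝ) ≤ cT * F.T := mul_nonneg hcT (by simpa [Traj.T, sub_nonneg] using F.hab)
  have h2 : (0:ℝ) ≤ cT * G.T := mul_nonneg hcT (by simpa [Traj.T, sub_nonneg] using G.hab)
  have := Real.rpow_nonneg h1 p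
  have := Real.rpow_nonneg h2 p
  have hr0 : (0:ℝ) ≤ (r:ℝ) := Nat.cast_nonneg r
  nlinarith

lemma dC_eq_zero_of_eq {r : ℕ} {p cS : ℝ} (hp : 0 < p) (hcS : 0 ≤ cS) {F G : Traj r}
    (ha : F.a = G.a) (hb : F.b = G.b)
    (hf : ∀ t ∈ Icc F.a F.b, F.f t = G.f t) : dC r p cS F G = 0 := by
  unfold dC
  have hmax : max F.a G.a = F.a := by rw [← ha, max_self]
  have hmin : min F.b G.b = F.b := by rw [← hb, min_self]
  have hseg : segDist r p (max F.a G.a) (min F.b G.b) F.f G.f = 0 := by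
    rw [hmax, hmin]
    unfold segDist
    rw [intervalIntegral.integral_congr (g := fun _ => (0:ℝ))]
    · simp
    · intro t ht
      rw [uIcc_of_le F.hab] at ht
      show lpNorm r p (fun i => F.f t i - G.f t i) = 0
      have h0 : (fun i => F.f t i - G.f t i) = 0 := by
        funext i; simp [hf t ht]
      rw [h0]; exact lpNorm_zero hp
  rw [hseg, ha, hb]
  simp only [sub_self, abs_zero, add_zero, mul_zero, min_self, max_self,
    Real.zero_rpow hp.ne']
  have hnn : (0:ℝ) ≤ (r:ℝ) * (2 * cS * (G.b - G.a)) ^ p :=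
    mul_nonneg (Nat.cast_nonneg r)
      (Real.rpow_nonneg (mul_nonneg (by linarith) (by linarith [G.hab])) _)
  rw [zero_add, min_eq_left hnn]
  exact Real.zero_rpow (by positivity)

lemma dC_eq_zero {r : ℕ} {p cS : ℝ} (hr : 1 ≤ r) (hp : 0 < p) (hcS : 0 < cS) {F G : Traj r}
    (hov : Overlap F G) (hF : F.a < F.b) (hG : G.a < G.b)
    (h : dC r p cS F G = 0) :
    F.a = G.a ∧ F.b = G.b ∧ ∀ t ∈ Icc F.a F.b, F.f t = G.f t := by
  have hrpos : (0:ℝ) < (r:ℝ) := by exact_mod_cast hr.trans_lt' Nat.zero_lt_one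
  unfold dC at h
  have h1 : (0:ℝ) ≤ (r : ℝ) * (cS * (|F.a - G.a| + |F.b - G.b|)) ^ p := by positivity
  have h2 : (0:ℝ) ≤ (segDist r p (max F.a G.a) (min F.b G.b) F.f G.f) ^ p :=
    Real.rpow_nonneg (segDist_nonneg hov _ _) _
  have h3 : (0:ℝ) ≤ (r : ℝ) * (2 * cS * (min F.b G.b - max F.a G.a)) ^ p :=
    mul_nonneg (Nat.cast_nonneg r) (Real.rpow_nonneg
      (mul_nonneg (by linarith) (by have h' : max F.a G.a ≤ min F.b G.b := hov; linarith)) _)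
  have hmin := le_min h2 h3
  have hbase := (Real.rpow_eq_zero (by linarith) (by positivity : (1:ℝ)/p ≠ 0)).mp h
  have hA : (r : ℝ) * (cS * (|F.a - G.a| + |F.b - G.b|)) ^ p = 0 := by linarith
  have hB : min ((segDist r p (max F.a G.a) (min F.b G.b) F.f G.f) ^ p)
      ((r : ℝ) * (2 * cS * (min F.b G.b - max F.a G.a)) ^ p) = 0 := by linarith
  -- from hA: a = a', b = b'
  have hs : cS * (|F.a - G.a| + |F.b - G.b|) = 0 := by
    have := mul_eq_zero.mp hA
    rcases this with h' | h'
    · exact absurd h' hrpos.ne'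
    · exact (Real.rpow_eq_zero (by positivity) hp.ne').mp h'
  have habs : |F.a - G.a| + |F.b - G.b| = 0 := by
    rcases mul_eq_zero.mp hs with h' | h'
    · exact absurd h' hcS.ne'
    · exact h'
  have ha : F.a = G.a := by
    have h1 := abs_nonneg (F.a - G.a); have h2 := abs_nonneg (F.b - G.b)
    have : |F.a - G.a| = 0 := by linarith
    have := abs_eq_zero.mp this; linarith
  have hb : F.b = G.b := by
    have h1 := abs_nonneg (F.a - G.a); have h2 := abs_nonneg (F.b - G.b)
    have : |F.b - G.b| = 0 := by linarith
    have := abs_eq_zero.mp this; linarith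
  refine ⟨ha, hb, ?_⟩
  have hmax : max F.a G.a = F.a := by rw [← ha, max_self]
  have hmin' : min F.b G.b = F.b := by rw [← hb, min_self]
  have hcut : (0:ℝ) < (r : ℝ) * (2 * cS * (min F.b G.b - max F.a G.a)) ^ p := by
    rw [hmax, hmin']
    have hb0 : (0:ℝ) < 2 * cS * (F.b - F.a) := by nlinarith
    exact mul_pos hrpos (Real.rpow_pos_of_pos hb0 p)
  have hseg : (segDist r p (max F.a G.a) (min F.b G.b) F.f G.f) ^ p = 0 := by
    rcases min_eq_iff.mp hB with ⟨h', _⟩ | ⟨h', _⟩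
    · exact h'
    · linarith
  have hseg0 : segDist r p F.a F.b F.f G.f = 0 := by
    rw [hmax, hmin'] at hseg
    exact (Real.rpow_eq_zero (segDist_nonneg F.hab _ _) hp.ne').mp hseg
  have hGc : ContinuousOn G.f (Icc F.a F.b) := by
    rw [ha, hb]; exact G.cont
  have key := eq_zero_of_integral_eq_zero hF
    (lpNorm_continuousOn hp F.cont hGc)
    (fun t _ => lpNorm_nonneg _ _ _) hseg0
  intro t ht
  have := lpNorm_eq_zero hp (key t ht)
  funext i
  have := congrFun this i
  simpa [sub_eq_zero] using this

lemma penalty_nonneg {r : ℕ} {p cT : ℝ} (hcT : 0 ≤ cT) (H : Traj r) :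
    0 ≤ (r : ℝ) * (cT * H.T) ^ p :=
  mul_nonneg (Nat.cast_nonneg r)
    (Real.rpow_nonneg (mul_nonneg hcT (by simpa [Traj.T, sub_nonneg] using H.hab)) _)

lemma penalty_pos {r : ℕ} {p cT : ℝ} (hr : 1 ≤ r) (hcT : 0 < cT) {H : Traj r}
    (hT : H.a < H.b) : 0 < (r : ℝ) * (cT * H.T) ^ p := by
  have hrpos : (0:ℝ) < (r:ℝ) := by exact_mod_cast Nat.lt_of_lt_of_le Nat.zero_lt_one hr
  exact mul_pos hrpos (Real.rpow_pos_of_pos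
    (mul_pos hcT (by simpa [Traj.T, sub_pos] using hT)) _)

lemma dC_eq_zero_of_dCheck {r : ℕ} {p cS cT : ℝ} (hr : 1 ≤ r) (hcT : 0 < cT)
    {F G : Traj r} (hF : F.a < F.b) (hG : G.a < G.b)
    (h : dCheck r p cS cT F G = 0) : dC r p cS F G = 0 := by
  unfold dCheck at h
  have hcut : 0 < ((r : ℝ) * (cT * F.T) ^ p + (r : ℝ) * (cT * G.T) ^ p) ^ (1 / p) :=
    Real.rpow_pos_of_pos (add_pos (penalty_pos hr hcT hF) (penalty_pos hr hcT hG)) _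
  rcases min_eq_iff.mp h with ⟨h', _⟩ | ⟨h', _⟩
  · exact h'
  · exact absurd h' hcut.ne'

lemma dCheck_eq_zero_of_dC {r : ℕ} {p cS cT : ℝ} (hcT : 0 ≤ cT)
    {F G : Traj r} (h : dC r p cS F G = 0) : dCheck r p cS cT F G = 0 := by
  unfold dCheck
  rw [h]
  exact min_eq_left (Real.rpow_nonneg
    (add_nonneg (penalty_nonneg hcT F) (penalty_nonneg hcT G)) _)

open scoped Classical in
lemma starCost_nonneg {r : ℕ} {m n : ℕ} {p cS cT : ℝ} (hcS : 0 ≤ cS) (hcT : 0 ≤ cT)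
    {F : Fin m → Traj r} {G : Fin n → Traj r}
    (hFG : ∀ j i, Overlap (F j) (G i)) (θ : Finset (Fin m × Fin n)) :
    0 ≤ starCost r p cS cT F G θ := by
  unfold starCost
  have h1 : 0 ≤ ∑ q ∈ θ, dCheck r p cS cT (F q.1) (G q.2) ^ p :=
    Finset.sum_nonneg fun q _ => Real.rpow_nonneg (dCheck_nonneg hcS hcT (hFG _ _)) _
  have h2 : 0 ≤ ∑ j ∈ Finset.univ.filter (fun j : Fin m => ∀ q ∈ θ, q.1 ≠ j),
      (r : ℝ) * (cT * (F j).T) ^ p :=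
    Finset.sum_nonneg fun j _ => penalty_nonneg hcT _
  have h3 : 0 ≤ ∑ i ∈ Finset.univ.filter (fun i : Fin n => ∀ q ∈ θ, q.2 ≠ i),
      (r : ℝ) * (cT * (G i).T) ^ p :=
    Finset.sum_nonneg fun i _ => penalty_nonneg hcT _
  linarith

open scoped Classical in
lemma starCost_eq_zero {r : ℕ} {m n : ℕ} {p cS cT : ℝ} (hr : 1 ≤ r)
    (hcS : 0 ≤ cS) (hcT : 0 < cT)
    {F : Fin m → Traj r} {G : Fin n → Traj r}
    (hFG : ∀ j i, Overlap (F j) (G i))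
    (hFnd : ∀ j, (F j).a < (F j).b) (hGnd : ∀ i, (G i).a < (G i).b)
    {θ : Finset (Fin m × Fin n)}
    (h : starCost r p cS cT F G θ = 0) :
    (∀ q ∈ θ, dCheck r p cS cT (F q.1) (G q.2) = 0) ∧
    (∀ j : Fin m, ∃ q ∈ θ, q.1 = j) ∧ (∀ i : Fin n, ∃ q ∈ θ, q.2 = i) := by
  unfold starCost at h
  have h1 : 0 ≤ ∑ q ∈ θ, dCheck r p cS cT (F q.1) (G q.2) ^ p :=
    Finset.sum_nonneg fun q _ => Real.rpow_nonneg (dCheck_nonneg hcS hcT.le (hFG _ _)) _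
  have h2 : 0 ≤ ∑ j ∈ Finset.univ.filter (fun j : Fin m => ∀ q ∈ θ, q.1 ≠ j),
      (r : ℝ) * (cT * (F j).T) ^ p :=
    Finset.sum_nonneg fun j _ => penalty_nonneg hcT.le _
  have h3 : 0 ≤ ∑ i ∈ Finset.univ.filter (fun i : Fin n => ∀ q ∈ θ, q.2 ≠ i),
      (r : ℝ) * (cT * (G i).T) ^ p :=
    Finset.sum_nonneg fun i _ => penalty_nonneg hcT.le _
  have e1 : ∑ q ∈ θ, dCheck r p cS cT (F q.1) (G q.2) ^ p = 0 := by linarith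
  have e2 : ∑ j ∈ Finset.univ.filter (fun j : Fin m => ∀ q ∈ θ, q.1 ≠ j),
      (r : ℝ) * (cT * (F j).T) ^ p = 0 := by linarith
  have e3 : ∑ i ∈ Finset.univ.filter (fun i : Fin n => ∀ q ∈ θ, q.2 ≠ i),
      (r : ℝ) * (cT * (G i).T) ^ p = 0 := by linarith
  refine ⟨?_, ?_, ?_⟩
  · intro q hq
    have := (Finset.sum_eq_zero_iff_of_nonneg
      (fun q _ => Real.rpow_nonneg (dCheck_nonneg hcS hcT.le (hFG _ _)) _)).mp e1 q hq
    have hnn : 0 ≤ dCheck r p cS cT (F q.1) (G q.2) := dCheck_nonneg hcS hcT.le (hFG _ _)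
    by_contra hne
    have hpos : 0 < dCheck r p cS cT (F q.1) (G q.2) := lt_of_le_of_ne hnn (Ne.symm hne)
    exact absurd this (Real.rpow_pos_of_pos hpos p).ne'
  · intro j
    by_contra hno
    push_neg at hno
    have hmem : j ∈ Finset.univ.filter (fun j : Fin m => ∀ q ∈ θ, q.1 ≠ j) := by
      simp only [Finset.mem_filter, Finset.mem_univ, true_and]
      exact fun q hq => hno q hq
    have := (Finset.sum_eq_zero_iff_of_nonneg
      (fun j _ => penalty_nonneg hcT.le (F j))).mp e2 j hmem
    exact absurd this (penalty_pos hr hcT (hFnd j)).ne'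
  · intro i
    by_contra hno
    push_neg at hno
    have hmem : i ∈ Finset.univ.filter (fun i : Fin n => ∀ q ∈ θ, q.2 ≠ i) := by
      simp only [Finset.mem_filter, Finset.mem_univ, true_and]
      exact fun q hq => hno q hq
    have := (Finset.sum_eq_zero_iff_of_nonneg
      (fun i _ => penalty_nonneg hcT.le (G i))).mp e3 i hmem
    exact absurd this (penalty_pos hr hcT (hGnd i)).ne'

open scoped Classical in
lemma starCost_graph_eq_zero {r : ℕ} {m n : ℕ} {p cS cT : ℝ} (hp : 0 < p)
    {F : Fin m → Traj r} {G : Fin n → Traj r} (σ : Fin m ≃ Fin n)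
    (hd : ∀ j, dCheck r p cS cT (F j) (G (σ j)) = 0) :
    starCost r p cS cT F G (Finset.univ.image (fun j => (j, σ j))) = 0 := by
  unfold starCost
  have e1 : ∑ q ∈ Finset.univ.image (fun j => (j, σ j)),
      dCheck r p cS cT (F q.1) (G q.2) ^ p = 0 := by
    apply Finset.sum_eq_zero
    intro q hq
    obtain ⟨j, _, rfl⟩ := Finset.mem_image.mp hq
    rw [hd j]
    exact Real.zero_rpow hp.ne'
  have e2 : (Finset.univ.filter
      (fun j : Fin m => ∀ q ∈ Finset.univ.image (fun j => (j, σ j)), q.1 ≠ j)) = ∅ := by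
    apply Finset.filter_eq_empty_iff.mpr
    intro j _
    push_neg
    exact ⟨(j, σ j), Finset.mem_image_of_mem _ (Finset.mem_univ j), rfl⟩
  have e3 : (Finset.univ.filter
      (fun i : Fin n => ∀ q ∈ Finset.univ.image (fun j : Fin m => (j, σ j)), q.2 ≠ i)) = ∅ := by
    apply Finset.filter_eq_empty_iff.mpr
    intro i _
    push_neg
    refine ⟨(σ.symm i, σ (σ.symm i)),
      Finset.mem_image_of_mem _ (Finset.mem_univ (σ.symm i)), by simp⟩
  rw [e1, e2, e3]
  simp

lemma graph_isAssignment {m n : ℕ} (σ : Fin m ≃ Fin n) :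
    IsAssignment (Finset.univ.image (fun j => (j, σ j))) := by
  intro q hq q' hq' hor
  obtain ⟨j, _, rfl⟩ := Finset.mem_image.mp hq
  obtain ⟨j', _, rfl⟩ := Finset.mem_image.mp hq'
  rcases hor with h | h
  · simp only at h; subst h; rfl
  · simp only at h
    have := σ.injective h
    subst this; rfl


end StarIDProofs

/-- Identity of indiscernibles for the Star-ID: it vanishes exactly when the
two tuples coincide up to a bijective relabeling. -/
theorem starID_eq_zero_iff (r : ℕ) (hr : 1 ≤ r) (p : ℝ) (hp : 1 ≤ p)
    (cS cT : ℝ) (hcS : 0 < cS) (hcT : 0 < cT)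
    {m n : ℕ} (F : Fin m → Traj r) (G : Fin n → Traj r)
    (hFF : ∀ j j', Overlap (F j) (F j'))
    (hGG : ∀ i i', Overlap (G i) (G i'))
    (hFG : ∀ j i, Overlap (F j) (G i))
    (hFnd : ∀ j, (F j).a < (F j).b)
    (hGnd : ∀ i, (G i).a < (G i).b) :
    starID r p cS cT F G = 0 ↔
      m = n ∧ ∃ σ : Fin m ≃ Fin n, ∀ j,
        (F j).a = (G (σ j)).a ∧ (F j).b = (G (σ j)).b ∧
        ∀ t ∈ Set.Icc (F j).a (F j).b, (F j).f t = (G (σ j)).f t := by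

  have hp0 : (0:ℝ) < p := lt_of_lt_of_le one_pos hp
  have hq : (1:ℝ)/p ≠ 0 := by positivity
  unfold starID
  set S := ((fun θ => starCost r p cS cT F G θ ^ (1 / p)) '' {θ | IsAssignment θ}) with hSdef
  have hne : S.Nonempty :=
    ⟨_, Set.mem_image_of_mem _ (show IsAssignment (∅ : Finset (Fin m × Fin n)) by
      intro q hq'; simp at hq')⟩
  have hlb : ∀ x ∈ S, (0:ℝ) ≤ x := by
    rintro x ⟨θ, hθ, rfl⟩
    exact Real.rpow_nonneg (starCost_nonneg hcS.le hcT.le hFG θ) _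
  have hbdd : BddBelow S := ⟨0, fun x hx => hlb x hx⟩
  constructor
  · intro h0
    have hfin : S.Finite := Set.Finite.image _ (Set.toFinite _)
    have hmem := hne.csInf_mem hfin
    rw [h0] at hmem
    obtain ⟨θ, hθ, hval⟩ := hmem
    have hcost0 : starCost r p cS cT F G θ = 0 :=
      (Real.rpow_eq_zero (starCost_nonneg hcS.le hcT.le hFG θ) hq).mp hval
    obtain ⟨hd0, hL, hR⟩ := starCost_eq_zero hr hcS.le hcT hFG hFnd hGnd hcost0
    have hτ : ∀ j : Fin m, ∃ i : Fin n, (j, i) ∈ θ := by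
      intro j
      obtain ⟨q, hqθ, hq1⟩ := hL j
      exact ⟨q.2, by rwa [← hq1, Prod.mk.eta]⟩
    choose τ hτmem using hτ
    have hinj : Function.Injective τ := by
      intro j j' hjj
      have := hθ _ (hτmem j) _ (hτmem j') (Or.inr hjj)
      exact (Prod.mk.injEq _ _ _ _).mp this |>.1
    have hsurj : Function.Surjective τ := by
      intro i
      obtain ⟨q, hqθ, hq2⟩ := hR i
      have := hθ _ (hτmem q.1) _ hqθ (Or.inl rfl)
      refine ⟨q.1, ?_⟩
      rw [← hq2, ← this]
    have hbij : Function.Bijective τ := ⟨hinj, hsurj⟩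
    have hmn : m = n := by
      have := Fintype.card_congr (Equiv.ofBijective τ hbij)
      simpa using this
    refine ⟨hmn, Equiv.ofBijective τ hbij, ?_⟩
    intro j
    have hd : dCheck r p cS cT (F j) (G (τ j)) = 0 := hd0 (j, τ j) (hτmem j)
    have hdc : dC r p cS (F j) (G (τ j)) = 0 :=
      dC_eq_zero_of_dCheck hr hcT (hFnd j) (hGnd (τ j)) hd
    exact dC_eq_zero hr hp0 hcS (hFG j (τ j)) (hFnd j) (hGnd (τ j)) hdc
  · rintro ⟨hmn, σ, hσ⟩
    have hd : ∀ j, dCheck r p cS cT (F j) (G (σ j)) = 0 := by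
      intro j
      exact dCheck_eq_zero_of_dC hcT.le
        (dC_eq_zero_of_eq hp0 hcS.le (hσ j).1 (hσ j).2.1 (hσ j).2.2)
    have hmem : (0:ℝ) ∈ S := by
      refine ⟨Finset.univ.image (fun j => (j, σ j)), graph_isAssignment σ, ?_⟩
      show starCost r p cS cT F G (Finset.univ.image (fun j => (j, σ j))) ^ (1/p) = 0
      rw [starCost_graph_eq_zero hp0 σ hd]
      exact Real.zero_rpow hq
    exact le_antisymm (csInf_le hbdd hmem) (le_csInf hne fun x hx => hlb x hx)
end
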